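/- For real α > -1, y > 0, and natural numbers m ≠ n, the functions f_0(ρ) = 1 and f_n(ρ) = L_n^{(α)}(ρ) - (I_{n,0}/I_{n-1,0}) L_{n-1}^{(α)}(ρ) for n ≥ 1 are orthogonal with respect to the weight w(ρ) = (1+yρ)^{-1} ρ^α e^{-ρ} on (0,∞): ∫_0^∞ w(ρ) f_m(ρ) f_n(ρ) dρ = 0 for m ≠ n. -/

import Mathlib

open MeasureTheory Real Set

/-- Generalized Laguerre polynomial `L_n^{(α)}(x)`. -/
noncomputable def genLaguerre (α : ℝ) (n : ℕ) (x : ℝ) : ℝ :=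
  ∑ j ∈ Finset.range (n + 1),
    (-1 : ℝ) ^ j * (Real.Gamma (α + n + 1) /
      (Real.Gamma (α + j + 1) * (Nat.factorial (n - j)))) * x ^ j / (Nat.factorial j)

/-- The function `I_{m,n}^{(α,β)}(y)`. -/
noncomputable def Imn (α β y : ℝ) (m n : ℕ) : ℝ :=
  ∫ ρ in Ioi (0 : ℝ), (1 + y * ρ)⁻¹ * ρ ^ α * Real.exp (-ρ) *
    genLaguerre α m ρ * genLaguerre β n ρ


/-- The orthogonal polynomials for the weight (1+yρ)⁻¹ ρ^α e^(-ρ). -/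
noncomputable def fpoly (α y : ℝ) (n : ℕ) (ρ : ℝ) : ℝ :=
  if n = 0 then 1
  else genLaguerre α n ρ -
    (Imn α α y n 0 / Imn α α y (n - 1) 0) * genLaguerre α (n - 1) ρ

/-!
The Gamma moments `∫ ρ^α e^{-ρ} ρ^j = Γ(α+j+1)` turn `∫ ρ^α e^{-ρ} L_m^{(α)} ρ^j` into a multiple
of the `m`-th finite difference of the polynomial `k ↦ (α+k+1)_j`, which vanishes for `j < m`; so
`L_m^{(α)}` is orthogonal to all polynomials of degree `< m` for the Gamma weight. The ratio
`I_{m,0}/I_{m-1,0}` is chosen so that `∫ w f_m = 0`. For `deg p < m` write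
`p(ρ) = p(-1/y) + (ρ + 1/y) q(ρ)` with `deg q < m - 1`; since `(1 + yρ)⁻¹ (ρ + 1/y) = 1/y`,
this gives `∫ w f_m p = p(-1/y) ∫ w f_m + y⁻¹ ∫ ρ^α e^{-ρ} f_m q = 0`, and `deg f_n ≤ n`.
-/

open Polynomial Finset

theorem Polynomial.sum_range_neg_one_pow_mul_choose_mul_eval_eq_zero {R : Type*} [CommRing R]
    {P : R[X]} {m : ℕ} (hP : P.natDegree < m) :
    ∑ k ∈ range (m + 1), (-1 : R) ^ (m - k) * m.choose k * P.eval (k : R) = 0 := by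
  have h := congrFun (fwdDiff_iter_eq_zero_of_degree_lt hP) 0
  rw [fwdDiff_iter_eq_sum_shift] at h
  simpa using h

theorem Real.Gamma_add_nat_eq_mul_ascPochhammer {x : ℝ} (hx : 0 < x) (j : ℕ) :
    Gamma (x + j) = Gamma x * (ascPochhammer ℝ j).eval x := by
  induction j with
  | zero => simp
  | succ j ih =>
    rw [Nat.cast_succ, ← add_assoc, Gamma_add_one (by positivity), ih, ascPochhammer_succ_eval]
    ring

theorem rpow_mul_exp_neg_mul_pow_eq {α x : ℝ} (hx : 0 < x) (j : ℕ) :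
    exp (-x) * x ^ (α + j + 1 - 1) = x ^ α * exp (-x) * x ^ j := by
  rw [add_sub_cancel_right, rpow_add hx, rpow_natCast]
  ring

theorem integrableOn_rpow_mul_exp_neg_mul_pow {α : ℝ} (hα : -1 < α) (j : ℕ) :
    IntegrableOn (fun ρ : ℝ => ρ ^ α * exp (-ρ) * ρ ^ j) (Ioi 0) :=
  (GammaIntegral_convergent (by linarith [j.cast_nonneg (α := ℝ)] : 0 < α + j + 1)).congr_fun
    (fun _ hx => rpow_mul_exp_neg_mul_pow_eq hx j) measurableSet_Ioi

theorem integral_rpow_mul_exp_neg_mul_pow {α : ℝ} (hα : -1 < α) (j : ℕ) :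
    ∫ ρ in Ioi (0 : ℝ), ρ ^ α * exp (-ρ) * ρ ^ j = Gamma (α + j + 1) := by
  rw [Gamma_eq_integral (by linarith [j.cast_nonneg (α := ℝ)])]
  exact setIntegral_congr_fun measurableSet_Ioi fun _ hx =>
    (rpow_mul_exp_neg_mul_pow_eq hx j).symm

theorem integrableOn_rpow_mul_exp_neg_mul_sum {ι : Type*} {α : ℝ} (hα : -1 < α)
    (s : Finset ι) (a : ι → ℝ) (e : ι → ℕ) :
    IntegrableOn (fun ρ : ℝ => ρ ^ α * exp (-ρ) * ∑ i ∈ s, a i * ρ ^ e i) (Ioi 0) := by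
  simp_rw [mul_sum, mul_left_comm _ (a _)]
  exact integrable_finsetSum _ fun i _ =>
    (integrableOn_rpow_mul_exp_neg_mul_pow hα (e i)).const_mul _

theorem integral_rpow_mul_exp_neg_mul_sum {ι : Type*} {α : ℝ} (hα : -1 < α)
    (s : Finset ι) (a : ι → ℝ) (e : ι → ℕ) :
    ∫ ρ in Ioi (0 : ℝ), ρ ^ α * exp (-ρ) * ∑ i ∈ s, a i * ρ ^ e i
      = ∑ i ∈ s, a i * Gamma (α + e i + 1) := by
  simp_rw [mul_sum, mul_left_comm _ (a _)]
  rw [integral_finsetSum _ fun i _ => (integrableOn_rpow_mul_exp_neg_mul_pow hα (e i)).const_mul _]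
  simp_rw [integral_const_mul, integral_rpow_mul_exp_neg_mul_pow hα]

theorem integrableOn_rpow_mul_exp_neg_mul_eval {α : ℝ} (hα : -1 < α) (p : ℝ[X]) :
    IntegrableOn (fun ρ : ℝ => ρ ^ α * exp (-ρ) * p.eval ρ) (Ioi 0) := by
  simp_rw [eval_eq_sum_range]
  exact integrableOn_rpow_mul_exp_neg_mul_sum hα _ _ id

theorem integrableOn_inv_one_add_mul_mul_rpow_mul_exp_neg_mul_eval {α y : ℝ} (hα : -1 < α)
    (hy : 0 ≤ y) (p : ℝ[X]) :
    IntegrableOn (fun ρ : ℝ => (1 + y * ρ)⁻¹ * ρ ^ α * exp (-ρ) * p.eval ρ) (Ioi 0) := by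
  simp_rw [mul_assoc _ (_ ^ α), mul_assoc _ (_ * exp _)]
  refine (integrableOn_rpow_mul_exp_neg_mul_eval hα p).bdd_mul (c := 1)
    (by fun_prop) ?_
  filter_upwards [ae_restrict_mem measurableSet_Ioi] with ρ (hρ : 0 < ρ)
  rw [norm_inv, Real.norm_of_nonneg (by positivity)]
  exact inv_le_one_of_one_le₀ (by nlinarith)

noncomputable def genLaguerreCoeff (α : ℝ) (n j : ℕ) : ℝ :=
  (-1 : ℝ) ^ j * (Gamma (α + n + 1) / (Gamma (α + j + 1) * (n - j).factorial)) / j.factorial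

theorem genLaguerre_eq_sum (α : ℝ) (n : ℕ) (x : ℝ) :
    genLaguerre α n x = ∑ j ∈ range (n + 1), genLaguerreCoeff α n j * x ^ j := by
  simp only [genLaguerre, genLaguerreCoeff]
  exact sum_congr rfl fun _ _ => by ring

theorem genLaguerre_zero {α : ℝ} (hα : -1 < α) (x : ℝ) : genLaguerre α 0 x = 1 := by
  have : Gamma (α + 1) ≠ 0 := (Gamma_pos_of_pos (by linarith)).ne'
  simp [genLaguerre, this]

noncomputable def genLaguerrePoly (α : ℝ) (n : ℕ) : ℝ[X] :=
  ∑ j ∈ range (n + 1), C (genLaguerreCoeff α n j) * X ^ j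

@[simp]
theorem eval_genLaguerrePoly (α : ℝ) (n : ℕ) (x : ℝ) :
    (genLaguerrePoly α n).eval x = genLaguerre α n x := by
  simp [genLaguerrePoly, genLaguerre_eq_sum, eval_finsetSum]

theorem natDegree_genLaguerrePoly_le (α : ℝ) (n : ℕ) : (genLaguerrePoly α n).natDegree ≤ n :=
  natDegree_sum_le_of_forall_le _ _ fun _ hj =>
    (natDegree_C_mul_X_pow_le _ _).trans (Nat.lt_succ_iff.mp (mem_range.mp hj))

theorem genLaguerreCoeff_mul_Gamma {α : ℝ} (hα : -1 < α) {n k : ℕ} (hk : k ≤ n) :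
    genLaguerreCoeff α n k * Gamma (α + k + 1)
      = (-1) ^ n * (Gamma (α + n + 1) / n.factorial) * ((-1) ^ (n - k) * n.choose k) := by
  have hΓ : Gamma (α + k + 1) ≠ 0 :=
    (Gamma_pos_of_pos (by linarith [k.cast_nonneg (α := ℝ)])).ne'
  have hsign : (-1 : ℝ) ^ k = (-1) ^ n * (-1) ^ (n - k) := by
    rw [← pow_add, show n + (n - k) = k + 2 * (n - k) by omega, pow_add, pow_mul]
    norm_num
  rw [genLaguerreCoeff, hsign, Nat.cast_choose ℝ hk]
  field_simp

theorem integral_rpow_mul_exp_neg_mul_genLaguerre_mul_pow_eq_zero {α : ℝ} (hα : -1 < α)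
    {m j : ℕ} (hj : j < m) :
    ∫ ρ in Ioi (0 : ℝ), ρ ^ α * exp (-ρ) * genLaguerre α m ρ * ρ ^ j = 0 := by
  let P : ℝ[X] := (ascPochhammer ℝ j).comp (X + C (α + 1))
  have hP : P.natDegree < m := by
    rwa [natDegree_comp, ascPochhammer_natDegree, natDegree_X_add_C, mul_one]
  have hΓ (k : ℕ) : Gamma (α + (k + j : ℕ) + 1) = Gamma (α + k + 1) * P.eval (k : ℝ) := by
    rw [show α + (k + j : ℕ) + 1 = α + k + 1 + j by push_cast; ring,
      Gamma_add_nat_eq_mul_ascPochhammer (by linarith [k.cast_nonneg (α := ℝ)])]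
    simp only [P, eval_comp, eval_add, eval_X, eval_C]
    ring_nf
  have hsum (ρ : ℝ) : ρ ^ α * exp (-ρ) * genLaguerre α m ρ * ρ ^ j
      = ρ ^ α * exp (-ρ) * ∑ k ∈ range (m + 1), genLaguerreCoeff α m k * ρ ^ (k + j) := by
    simp_rw [genLaguerre_eq_sum, mul_assoc _ (∑ _ ∈ _, _), sum_mul, pow_add, mul_assoc]
  simp_rw [hsum]
  rw [integral_rpow_mul_exp_neg_mul_sum hα]
  simp_rw [hΓ, ← mul_assoc]
  rw [sum_congr rfl fun k hk => by
    rw [genLaguerreCoeff_mul_Gamma hα (Nat.lt_succ_iff.mp (mem_range.mp hk)), mul_assoc],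
    ← mul_sum, sum_range_neg_one_pow_mul_choose_mul_eval_eq_zero hP, mul_zero]

theorem integrableOn_rpow_mul_exp_neg_mul_genLaguerre_mul_eval {α : ℝ} (hα : -1 < α) (m : ℕ)
    (p : ℝ[X]) :
    IntegrableOn (fun ρ : ℝ => ρ ^ α * exp (-ρ) * genLaguerre α m ρ * p.eval ρ) (Ioi 0) := by
  simpa only [eval_mul, eval_genLaguerrePoly, ← mul_assoc] using
    integrableOn_rpow_mul_exp_neg_mul_eval hα (genLaguerrePoly α m * p)

theorem integral_rpow_mul_exp_neg_mul_genLaguerre_mul_eval_eq_zero {α : ℝ} (hα : -1 < α)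
    {m : ℕ} {p : ℝ[X]} (hp : p.degree < m) :
    ∫ ρ in Ioi (0 : ℝ), ρ ^ α * exp (-ρ) * genLaguerre α m ρ * p.eval ρ = 0 := by
  have hint (j : ℕ) :
      IntegrableOn (fun ρ : ℝ => ρ ^ α * exp (-ρ) * genLaguerre α m ρ * ρ ^ j) (Ioi 0) := by
    simpa using integrableOn_rpow_mul_exp_neg_mul_genLaguerre_mul_eval hα m (X ^ j)
  simp_rw [eval_eq_sum, Polynomial.sum_def, mul_sum, mul_left_comm _ (p.coeff _)]
  rw [integral_finsetSum _ fun j _ => (hint j).const_mul _]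
  refine sum_eq_zero fun j hj => ?_
  rw [integral_const_mul, integral_rpow_mul_exp_neg_mul_genLaguerre_mul_pow_eq_zero hα
    (by exact_mod_cast (le_degree_of_mem_supp j hj).trans_lt hp), mul_zero]

theorem Imn_zero_eq_integral {α : ℝ} (hα : -1 < α) (y : ℝ) (k : ℕ) :
    Imn α α y k 0
      = ∫ ρ in Ioi (0 : ℝ), (1 + y * ρ)⁻¹ * ρ ^ α * exp (-ρ) * genLaguerre α k ρ := by
  simp only [Imn, genLaguerre_zero hα, mul_one]

noncomputable def fpolyPoly (α y : ℝ) (n : ℕ) : ℝ[X] :=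
  if n = 0 then 1
  else genLaguerrePoly α n - C (Imn α α y n 0 / Imn α α y (n - 1) 0) * genLaguerrePoly α (n - 1)

@[simp]
theorem eval_fpolyPoly (α y : ℝ) (n : ℕ) (x : ℝ) : (fpolyPoly α y n).eval x = fpoly α y n x := by
  unfold fpolyPoly fpoly
  split_ifs <;> simp

theorem natDegree_fpolyPoly_le (α y : ℝ) (n : ℕ) : (fpolyPoly α y n).natDegree ≤ n := by
  unfold fpolyPoly
  split_ifs
  · simp
  · refine (natDegree_sub_le _ _).trans (max_le (natDegree_genLaguerrePoly_le α n) ?_)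
    exact (natDegree_C_mul_le _ _).trans ((natDegree_genLaguerrePoly_le α _).trans (n.sub_le 1))

theorem fpoly_succ (α y : ℝ) (m : ℕ) (x : ℝ) :
    fpoly α y (m + 1) x
      = genLaguerre α (m + 1) x - Imn α α y (m + 1) 0 / Imn α α y m 0 * genLaguerre α m x :=
  if_neg m.succ_ne_zero

theorem integral_rpow_mul_exp_neg_mul_fpoly_succ_mul_eval_eq_zero {α : ℝ} (hα : -1 < α) (y : ℝ)
    {m : ℕ} {p : ℝ[X]} (hp : p.degree < m) :
    ∫ ρ in Ioi (0 : ℝ), ρ ^ α * exp (-ρ) * fpoly α y (m + 1) ρ * p.eval ρ = 0 := by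
  set c := Imn α α y (m + 1) 0 / Imn α α y m 0
  have hint := integrableOn_rpow_mul_exp_neg_mul_genLaguerre_mul_eval hα (p := p)
  have hsplit (ρ : ℝ) : ρ ^ α * exp (-ρ) * fpoly α y (m + 1) ρ * p.eval ρ
      = ρ ^ α * exp (-ρ) * genLaguerre α (m + 1) ρ * p.eval ρ
        - c * (ρ ^ α * exp (-ρ) * genLaguerre α m ρ * p.eval ρ) := by
    rw [fpoly_succ]
    ring
  simp_rw [hsplit]
  rw [integral_sub (hint _) ((hint m).const_mul c), integral_const_mul,
    integral_rpow_mul_exp_neg_mul_genLaguerre_mul_eval_eq_zero hα (hp.trans (by norm_cast; omega)),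
    integral_rpow_mul_exp_neg_mul_genLaguerre_mul_eval_eq_zero hα hp, mul_zero, sub_zero]

theorem integral_fpoly_succ_eq_zero {α y : ℝ} (hα : -1 < α) (hy : 0 ≤ y) {m : ℕ}
    (hI : Imn α α y m 0 ≠ 0) :
    ∫ ρ in Ioi (0 : ℝ), (1 + y * ρ)⁻¹ * ρ ^ α * exp (-ρ) * fpoly α y (m + 1) ρ = 0 := by
  set c := Imn α α y (m + 1) 0 / Imn α α y m 0
  have hint (k : ℕ) : IntegrableOn
      (fun ρ : ℝ => (1 + y * ρ)⁻¹ * ρ ^ α * exp (-ρ) * genLaguerre α k ρ) (Ioi 0) := by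
    simpa using
      integrableOn_inv_one_add_mul_mul_rpow_mul_exp_neg_mul_eval hα hy (genLaguerrePoly α k)
  have hsplit (ρ : ℝ) : (1 + y * ρ)⁻¹ * ρ ^ α * exp (-ρ) * fpoly α y (m + 1) ρ
      = (1 + y * ρ)⁻¹ * ρ ^ α * exp (-ρ) * genLaguerre α (m + 1) ρ
        - c * ((1 + y * ρ)⁻¹ * ρ ^ α * exp (-ρ) * genLaguerre α m ρ) := by
    rw [fpoly_succ]
    ring
  simp_rw [hsplit]
  rw [integral_sub (hint _) ((hint m).const_mul c), integral_const_mul, ← Imn_zero_eq_integral hα,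
    ← Imn_zero_eq_integral hα, div_mul_cancel₀ _ hI, sub_self]

theorem integral_fpoly_succ_mul_eval_eq_zero {α y : ℝ} (hα : -1 < α) (hy : 0 < y) {m : ℕ}
    (hI : Imn α α y m 0 ≠ 0) {p : ℝ[X]} (hp : p.degree ≤ m) :
    ∫ ρ in Ioi (0 : ℝ), (1 + y * ρ)⁻¹ * ρ ^ α * exp (-ρ) * fpoly α y (m + 1) ρ * p.eval ρ = 0 := by
  set a := -y⁻¹
  set q := p /ₘ (X - C a)
  have hq : q.degree < m := by
    rcases eq_or_ne p 0 with rfl | hp0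
    · simp [q]
    · exact (degree_divByMonic_lt _ _ hp0 (by rw [degree_X_sub_C]; exact one_pos)).trans_le hp
  have hdiv (ρ : ℝ) : p.eval ρ = p.eval a + (ρ - a) * q.eval ρ := by
    conv_lhs => rw [← modByMonic_add_div p (X - C a)]
    simp [modByMonic_X_sub_C_eq_C_eval, q]
  have hsplit : EqOn
      (fun ρ => (1 + y * ρ)⁻¹ * ρ ^ α * exp (-ρ) * fpoly α y (m + 1) ρ * p.eval ρ)
      (fun ρ => p.eval a * ((1 + y * ρ)⁻¹ * ρ ^ α * exp (-ρ) * fpoly α y (m + 1) ρ)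
        + y⁻¹ * (ρ ^ α * exp (-ρ) * fpoly α y (m + 1) ρ * q.eval ρ)) (Ioi 0) := by
    intro ρ (hρ : 0 < ρ)
    have : (1 + y * ρ)⁻¹ * (ρ - a) = y⁻¹ := by
      simp only [a]
      field_simp
      ring
    simp only [hdiv ρ]
    linear_combination (ρ ^ α * exp (-ρ) * fpoly α y (m + 1) ρ * q.eval ρ) * this
  have hint₁ := integrableOn_inv_one_add_mul_mul_rpow_mul_exp_neg_mul_eval hα hy.le
    (fpolyPoly α y (m + 1))
  have hint₂ := integrableOn_rpow_mul_exp_neg_mul_eval hα (fpolyPoly α y (m + 1) * q)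
  simp only [eval_mul, eval_fpolyPoly, ← mul_assoc] at hint₁ hint₂
  rw [setIntegral_congr_fun measurableSet_Ioi hsplit,
    integral_add (hint₁.const_mul _) (hint₂.const_mul _), integral_const_mul, integral_const_mul,
    integral_fpoly_succ_eq_zero hα hy.le hI,
    integral_rpow_mul_exp_neg_mul_fpoly_succ_mul_eval_eq_zero hα y hq, mul_zero, mul_zero, add_zero]

theorem fpoly_orthogonal (α y : ℝ) (hα : -1 < α) (hy : 0 < y)
    (hI : ∀ k : ℕ, Imn α α y k 0 ≠ 0) (m n : ℕ) (hmn : m ≠ n) :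
    (∫ ρ in Ioi (0 : ℝ), (1 + y * ρ)⁻¹ * ρ ^ α * Real.exp (-ρ) *
        fpoly α y m ρ * fpoly α y n ρ) = 0 := by
  wlog hnm : n < m generalizing m n
  · simpa only [mul_right_comm _ (fpoly α y m _)] using this n m hmn.symm (by omega)
  obtain ⟨k, rfl⟩ := Nat.exists_eq_add_one_of_ne_zero (Nat.ne_zero_of_lt hnm)
  simp_rw [← eval_fpolyPoly α y n]
  exact integral_fpoly_succ_mul_eval_eq_zero hα hy (hI k)
    (degree_le_of_natDegree_le ((natDegree_fpolyPoly_le α y n).trans (by omega)))
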